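/- Coherence theorem for monoidal categories (Mac Lane): for any type C, the free monoidal category on C has subsingleton hom-sets; that is, for any objects X and Y of the free monoidal category on C, any two morphisms f, g : X ⟶ Y are equal. Consequently every diagram built from associators, unitors, tensor products and identities commutes in any monoidal category. -/

import Mathlib

open CategoryTheory

theorem free_monoidal_coherence (C : Type u)
    (X Y : CategoryTheory.FreeMonoidalCategory C) (f g : X ⟶ Y) : f = g :=
  Subsingleton.elim f g
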